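/- For K = SU(3), the admissible coadjoint orbits of subregular type are exactly the orbits K·((1+2n)/2 · ω_i) for n ∈ ℤ_{≥0} and i ∈ {1,2}. That is, for μ = t·ω_i ∈ σ_i (t > 0), the condition μ − ρ + ρ_{σ_i} ∈ Λ holds iff t ∈ (1/2) + ℤ_{≥0}. -/

import Mathlib

/-! Coordinates are taken in the basis `ω₁, ω₂` of fundamental weights, so `Λ = ℤ × ℤ`.
In these coordinates both shifted weights `t • ωᵢ - ρ + ρ_{σᵢ}` have one coordinate `0` and the
other `t - 3/2`, so admissibility amounts to `t ∈ 3/2 + ℤ`, and positivity of `t` cuts this down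
to `1/2 + ℕ`. -/

lemma prod_mem_intLattice_iff (a b : ℝ) :
    (a, b) ∈ {v : ℝ × ℝ | ∃ m n : ℤ, v = ((m : ℝ), (n : ℝ))} ↔
      (∃ m : ℤ, a = m) ∧ ∃ n : ℤ, b = n := by
  simp only [Set.mem_ofPred_eq, Prod.ext_iff]
  exact ⟨fun ⟨m, n, hm, hn⟩ ↦ ⟨⟨m, hm⟩, ⟨n, hn⟩⟩, fun ⟨⟨m, hm⟩, ⟨n, hn⟩⟩ ↦ ⟨m, n, hm, hn⟩⟩

lemma exists_int_sub_three_halves_iff {t : ℝ} (ht : 0 < t) :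
    (∃ m : ℤ, t - 3 / 2 = m) ↔ ∃ n : ℕ, t = (1 + 2 * (n : ℝ)) / 2 := by
  constructor
  · rintro ⟨m, hm⟩
    have hm_nonneg : 0 ≤ m + 1 := by
      have : ((-2 : ℤ) : ℝ) < m := by push_cast; linarith
      have : (-2 : ℤ) < m := by exact_mod_cast this
      omega
    lift m + 1 to ℕ using hm_nonneg with n hn
    refine ⟨n, ?_⟩
    have : (n : ℝ) = m + 1 := by exact_mod_cast hn
    linarith
  · rintro ⟨n, rfl⟩
    exact ⟨n - 1, by push_cast; ring⟩

/-- Model: for `K = SU(3)`, `𝔱* = ℝ × ℝ` in the basis of fundamental weights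
`ω₁ = (1,0)`, `ω₂ = (0,1)`; the weight lattice `Λ` is `ℤω₁ + ℤω₂`, `ρ = ω₁ + ω₂ = (1,1)`, and
for the face `σᵢ = ℝ₊ωᵢ` the half sum `ρ_{σᵢ}` of positive roots of `𝔨_{σᵢ} ≅ u(2)` is half of
the simple root vanishing on `σᵢ`:  `ρ_{σ₁} = α₂/2 = (−1/2, 1)` and `ρ_{σ₂} = α₁/2 = (1, −1/2)`.
Claim: for `μ = t·ωᵢ` with `t > 0`, the admissibility condition `μ − ρ + ρ_{σᵢ} ∈ Λ` holds iff
`t ∈ 1/2 + ℤ₊`, i.e. the admissible subregular orbits are exactly `K·((1+2n)/2 · ωᵢ)`,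
`n ∈ ℤ₊`, `i = 1, 2`. -/
theorem stmt_7
    (Λ : Set (ℝ × ℝ)) (hΛ : Λ = {v : ℝ × ℝ | ∃ m n : ℤ, v = ((m : ℝ), (n : ℝ))})
    (ω₁ ω₂ ρ ρσ₁ ρσ₂ : ℝ × ℝ)
    (hω₁ : ω₁ = (1, 0)) (hω₂ : ω₂ = (0, 1)) (hρ : ρ = (1, 1))
    (hρσ₁ : ρσ₁ = (-(1/2 : ℝ), 1)) (hρσ₂ : ρσ₂ = (1, -(1/2 : ℝ))) :
    ∀ t : ℝ, 0 < t →
      ((t • ω₁ - ρ + ρσ₁ ∈ Λ ↔ ∃ n : ℕ, t = (1 + 2 * (n : ℝ)) / 2) ∧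
       (t • ω₂ - ρ + ρσ₂ ∈ Λ ↔ ∃ n : ℕ, t = (1 + 2 * (n : ℝ)) / 2)) := by
  intro t ht
  subst hΛ hω₁ hω₂ hρ hρσ₁ hρσ₂
  have h₁ : t • ((1 : ℝ), (0 : ℝ)) - (1, 1) + (-(1/2 : ℝ), 1) = (t - 3 / 2, 0) := by
    ext <;> simp; ring
  have h₂ : t • ((0 : ℝ), (1 : ℝ)) - (1, 1) + ((1 : ℝ), -(1/2 : ℝ)) = (0, t - 3 / 2) := by
    ext <;> simp; ring
  have zero_int : ∃ m : ℤ, (0 : ℝ) = m := ⟨0, by simp⟩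
  rw [h₁, h₂, prod_mem_intLattice_iff, prod_mem_intLattice_iff,
    exists_int_sub_three_halves_iff ht]
  exact ⟨and_iff_left zero_int, and_iff_right zero_int⟩
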